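/- For every integer m ≥ 1, every n ∈ ℤ and every a = (a_1, …, a_m) ∈ ℕ^m, set x_a := (a_1·2^{−n}, …, a_m·2^{−n}). Then the interleaving map B sends the half-open dyadic hyperblock ∏_{i=1}^m [a_i·2^{−n}, (a_i + 1)·2^{−n}) into the half-open interval [B(x_a), B(x_a) + 2^{−nm}), and this restriction of B is injective. -/

import Mathlib

open MeasureTheory

/-- The set `D` of admissible binary digit sequences: not all `1` below any index,
and eventually `0` towards `+∞`. -/
def D : Set (ℤ → Fin 2) :=
  {ι | (∀ n : ℤ, ∃ m ≤ n, ι m = 0) ∧ ∃ m : ℤ, ∀ n ≥ m, ι n = 0}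

/-- `Φ(ι) = ∑_{n ∈ ℤ} ι_n 2^n`. -/
noncomputable def Phi (ι : ℤ → Fin 2) : NNReal :=
  ∑' n : ℤ, ((ι n : ℕ) : NNReal) * 2 ^ n

/-- The binary digit map `b(x)_n = ⌊x 2^{-n}⌋ mod 2`. -/
noncomputable def bmap (x : NNReal) : ℤ → Fin 2 := fun n =>
  ⟨⌊(x : ℝ) * 2 ^ (-n)⌋₊ % 2, Nat.mod_lt _ (by norm_num)⟩

/-- The interleaving map `B(x) = Φ(q ↦ b(x_{q mod m})_{⌊q/m⌋})`. -/
noncomputable def Bmap (m : ℕ) (x : Fin m → NNReal) : NNReal :=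
  Phi fun q : ℤ =>
    if h : 0 < m then
      bmap (x ⟨(q % (m : ℤ)).toNat, by
        have hm' : (0 : ℤ) < (m : ℤ) := by exact_mod_cast h
        have h1 := Int.emod_lt_of_pos q hm'
        have h2 := Int.emod_nonneg q hm'.ne'
        omega⟩) (q / (m : ℤ))
    else 0

open scoped ENNReal NNReal

namespace BmapAux

/-- the floor `⌊x 2^{-k}⌋`. -/
noncomputable def F (x : NNReal) (k : ℤ) : ℕ := ⌊(x : ℝ) * 2 ^ (-k)⌋₊

lemma bmap_val (x : NNReal) (k : ℤ) : ((bmap x k : Fin 2) : ℕ) = F x k % 2 := rfl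

lemma bmap_eq_zero_iff {x : NNReal} {k : ℤ} : bmap x k = 0 ↔ F x k % 2 = 0 := by
  rw [Fin.ext_iff, bmap_val]; rfl

lemma F_succ (x : NNReal) (k : ℤ) : F x k = 2 * F x (k + 1) + F x k % 2 := by
  have h2 : (x : ℝ) * 2 ^ (-(k + 1)) = ((x : ℝ) * 2 ^ (-k)) / ((2 : ℕ) : ℝ) := by
    rw [neg_add, zpow_add₀ (two_ne_zero : (2 : ℝ) ≠ 0), zpow_neg_one]
    push_cast; ring
  have h3 : F x (k + 1) = F x k / 2 := by
    unfold F; rw [h2, Nat.floor_div_natCast]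
  omega

lemma F_le (x : NNReal) (k : ℤ) : (F x k : ℝ) * 2 ^ k ≤ (x : ℝ) := by
  have h := Nat.floor_le (by positivity : (0 : ℝ) ≤ (x : ℝ) * 2 ^ (-k))
  have h2 : (0 : ℝ) < 2 ^ k := by positivity
  have := mul_le_mul_of_nonneg_right h h2.le
  calc (F x k : ℝ) * 2 ^ k ≤ ((x : ℝ) * 2 ^ (-k)) * 2 ^ k := this
    _ = (x : ℝ) := by
        rw [mul_assoc, ← zpow_add₀ (two_ne_zero : (2 : ℝ) ≠ 0)]; simp

lemma lt_F_add_one (x : NNReal) (k : ℤ) : (x : ℝ) < ((F x k : ℝ) + 1) * 2 ^ k := by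
  have h := Nat.lt_floor_add_one ((x : ℝ) * 2 ^ (-k))
  have h2 : (0 : ℝ) < 2 ^ k := by positivity
  have := mul_lt_mul_of_pos_right h h2
  calc (x : ℝ) = ((x : ℝ) * 2 ^ (-k)) * 2 ^ k := by
        rw [mul_assoc, ← zpow_add₀ (two_ne_zero : (2 : ℝ) ≠ 0)]; simp
    _ < ((F x k : ℝ) + 1) * 2 ^ k := this

lemma F_eq_zero {x : NNReal} {K k : ℤ} (hK : (x : ℝ) < 2 ^ K) (hk : K ≤ k) : F x k = 0 := by
  rw [F, Nat.floor_eq_zero]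
  have hx : (x : ℝ) < 2 ^ k := lt_of_lt_of_le hK (zpow_le_zpow_right₀ one_le_two hk)
  have h2 : (0 : ℝ) < 2 ^ (-k) := by positivity
  calc (x : ℝ) * 2 ^ (-k) < 2 ^ k * 2 ^ (-k) := by
        exact mul_lt_mul_of_pos_right hx h2
    _ = 1 := by rw [← zpow_add₀ (two_ne_zero : (2 : ℝ) ≠ 0)]; simp

lemma exists_K (x : NNReal) : ∃ K : ℤ, (x : ℝ) < 2 ^ K := by
  obtain ⟨N, hN⟩ := pow_unbounded_of_one_lt (x : ℝ) one_lt_two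
  exact ⟨N, by rw [zpow_natCast]; exact hN⟩

lemma bmap_high (x : NNReal) {K k : ℤ} (hK : (x : ℝ) < 2 ^ K) (hk : K ≤ k) :
    bmap x k = 0 := bmap_eq_zero_iff.2 (by rw [F_eq_zero hK hk])

/-- there are `0` digits arbitrarily low. -/
lemma exists_dig_zero (x : NNReal) (M : ℤ) : ∃ k ≤ M, F x k % 2 = 0 := by
  by_contra hc
  push_neg at hc
  have hd : ∀ k ≤ M, F x k % 2 = 1 := fun k hk => by have := hc k hk; omega
  set f : ℤ → ℝ := fun k => (x : ℝ) * 2 ^ (-k) - F x k with hf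
  have hf0 : ∀ k, 0 ≤ f k := fun k => sub_nonneg.2 (Nat.floor_le (by positivity))
  have hf1 : ∀ k, f k < 1 := fun k => by
    have := Nat.lt_floor_add_one ((x : ℝ) * 2 ^ (-k))
    simp only [hf]; unfold F; linarith
  have hrec : ∀ k, f k = 2 * f (k + 1) - (F x k % 2 : ℕ) := by
    intro k
    have h1 : (F x k : ℝ) = 2 * F x (k + 1) + (F x k % 2 : ℕ) := by
      exact_mod_cast congrArg (Nat.cast (R := ℝ)) (F_succ x k)
    have h2 : (x : ℝ) * 2 ^ (-k) = 2 * ((x : ℝ) * 2 ^ (-(k + 1))) := by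
      rw [neg_add, zpow_add₀ (two_ne_zero : (2 : ℝ) ≠ 0), zpow_neg_one]; ring
    simp only [hf]; rw [h1, h2]; ring
  have key : ∀ N : ℕ, f (M + 1) * 2 ^ N = f (M + 1 - N) + (2 ^ N - 1) := by
    intro N; induction N with
    | zero => simp
    | succ N ih =>
      have hk : M - N ≤ M := by omega
      have h1 : f (M - N) = 2 * f (M - N + 1) - 1 := by
        have h := hrec (M - N); rw [hd _ hk] at h; simpa using h
      have e1 : M + 1 - ((N : ℕ) : ℤ) = (M - N) + 1 := by push_cast; ring
      have e2 : M + 1 - ((N + 1 : ℕ) : ℤ) = M - N := by push_cast; ring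
      rw [e2, pow_succ]
      rw [e1] at ih
      nlinarith [ih, h1]
  set c := f (M + 1) with hcdef
  have hc1 : c < 1 := hf1 _
  have hpos : 0 < 1 - c := by linarith
  obtain ⟨N, hN⟩ := pow_unbounded_of_one_lt (R := ℝ) (1 - c)⁻¹ one_lt_two
  have hb : (1 - c) * 2 ^ N ≤ 1 := by
    have h := key N
    have h0 := hf0 (M + 1 - N)
    nlinarith
  have : (1 - c) * (1 - c)⁻¹ < (1 - c) * 2 ^ N := mul_lt_mul_of_pos_left hN hpos
  rw [mul_inv_cancel₀ hpos.ne'] at this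
  linarith

lemma floor_const {a : ℕ} {m : ℤ} (hm : m ≤ 0) {t : ℝ}
    (h1 : (a : ℝ) * 2 ^ m ≤ t) (h2 : t < ((a : ℝ) + 1) * 2 ^ m) :
    ⌊t⌋₊ = ⌊(a : ℝ) * 2 ^ m⌋₊ := by
  have h2m : (0 : ℝ) < 2 ^ m := by positivity
  refine le_antisymm ?_ (Nat.floor_le_floor h1)
  refine Nat.le_floor ?_
  by_contra hlt
  push_neg at hlt
  set N := ⌊t⌋₊ with hNdef
  have hN : (N : ℝ) ≤ t := Nat.floor_le (le_trans (by positivity) h1)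
  set j : ℕ := (-m).toNat with hj
  have hjZ : ((j : ℕ) : ℤ) = -m := Int.toNat_of_nonneg (by omega)
  have hP : (2 : ℝ) ^ m = ((2 : ℝ) ^ j)⁻¹ := by
    rw [← zpow_natCast (2 : ℝ) j, ← zpow_neg]
    congr 1; omega
  have hPpos : (0 : ℝ) < (2 : ℝ) ^ j := by positivity
  have c1 : (a : ℝ) < N * 2 ^ j := by
    rw [hP] at hlt
    calc (a : ℝ) = (a : ℝ) * ((2:ℝ) ^ j)⁻¹ * 2 ^ j := by field_simp
      _ < N * 2 ^ j := mul_lt_mul_of_pos_right hlt hPpos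
  have c2 : (N : ℝ) * 2 ^ j < (a : ℝ) + 1 := by
    have hNlt : (N : ℝ) < ((a : ℝ) + 1) * ((2:ℝ) ^ j)⁻¹ := by
      rw [hP] at h2; exact lt_of_le_of_lt hN h2
    calc (N : ℝ) * 2 ^ j < (((a : ℝ) + 1) * ((2:ℝ) ^ j)⁻¹) * 2 ^ j :=
          mul_lt_mul_of_pos_right hNlt hPpos
      _ = (a : ℝ) + 1 := by field_simp
  have c1' : a < N * 2 ^ j := by exact_mod_cast c1
  have c2' : N * 2 ^ j < a + 1 := by exact_mod_cast c2
  omega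

lemma F_const {a : ℕ} {n : ℤ} {x : NNReal}
    (hx1 : (a : NNReal) * 2 ^ (-n) ≤ x) (hx2 : x < ((a : NNReal) + 1) * 2 ^ (-n))
    {k : ℤ} (hk : -n ≤ k) : F x k = F ((a : NNReal) * 2 ^ (-n)) k := by
  have hm : -n - k ≤ 0 := by omega
  have hr1 : (a : ℝ) * 2 ^ (-n) ≤ (x : ℝ) := by
    have := NNReal.coe_le_coe.2 hx1
    push_cast [NNReal.coe_zpow] at this; exact this
  have hr2 : (x : ℝ) < ((a : ℝ) + 1) * 2 ^ (-n) := by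
    have := NNReal.coe_lt_coe.2 hx2
    push_cast [NNReal.coe_zpow] at this; exact this
  have h2k : (0 : ℝ) < 2 ^ (-k) := by positivity
  have hsplit : (2 : ℝ) ^ (-n) * 2 ^ (-k) = 2 ^ (-n - k) := by
    rw [← zpow_add₀ (two_ne_zero : (2 : ℝ) ≠ 0)]; congr 1 <;> omega
  have b1 : (a : ℝ) * 2 ^ (-n - k) ≤ (x : ℝ) * 2 ^ (-k) := by
    rw [← hsplit, ← mul_assoc]; exact mul_le_mul_of_nonneg_right hr1 h2k.le
  have b2 : (x : ℝ) * 2 ^ (-k) < ((a : ℝ) + 1) * 2 ^ (-n - k) := by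
    rw [← hsplit, ← mul_assoc]; exact mul_lt_mul_of_pos_right hr2 h2k
  have hbase : ((((a : NNReal) * 2 ^ (-n) : NNReal)) : ℝ) * 2 ^ (-k) = (a : ℝ) * 2 ^ (-n - k) := by
    push_cast [NNReal.coe_zpow]
    rw [mul_assoc, hsplit]
  unfold F
  rw [floor_const hm b1 b2, hbase]

lemma bmap_const {a : ℕ} {n : ℤ} {x : NNReal}
    (hx1 : (a : NNReal) * 2 ^ (-n) ≤ x) (hx2 : x < ((a : NNReal) + 1) * 2 ^ (-n))
    {k : ℤ} (hk : -n ≤ k) : bmap x k = bmap ((a : NNReal) * 2 ^ (-n)) k :=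
  Fin.ext (by rw [bmap_val, bmap_val, F_const hx1 hx2 hk])

lemma bmap_base_low (a : ℕ) (n : ℤ) {k : ℤ} (hk : k < -n) :
    bmap ((a : NNReal) * 2 ^ (-n)) k = 0 := by
  rw [bmap_eq_zero_iff]
  set j : ℕ := (-n - k).toNat with hj
  have hjZ : ((j : ℕ) : ℤ) = -n - k := Int.toNat_of_nonneg (by omega)
  have hj1 : 1 ≤ j := by omega
  have hsplit : (2 : ℝ) ^ (-n) * 2 ^ (-k) = 2 ^ (j : ℤ) := by
    rw [← zpow_add₀ (two_ne_zero : (2 : ℝ) ≠ 0)]; congr 1 <;> omega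
  have hv : ((((a : NNReal) * 2 ^ (-n) : NNReal)) : ℝ) * 2 ^ (-k) = ((a * 2 ^ j : ℕ) : ℝ) := by
    push_cast [NNReal.coe_zpow]
    rw [mul_assoc, hsplit, zpow_natCast]
  rw [F, hv, Nat.floor_natCast]
  obtain ⟨t, ht⟩ : 2 ∣ 2 ^ j := dvd_pow_self 2 (by omega)
  have hre : a * 2 ^ j = 2 * (a * t) := by rw [ht]; ring
  rw [hre, Nat.mul_mod_right]

/-- `Φ` valued in `ℝ≥0∞`. -/
noncomputable def PhiE (ι : ℤ → Fin 2) : ℝ≥0∞ := ∑' q : ℤ, ((ι q : ℕ) : ℝ≥0∞) * 2 ^ q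

lemma term_le (ι : ℤ → Fin 2) (q : ℤ) : ((ι q : ℕ) : ℝ≥0∞) * 2 ^ q ≤ 2 ^ q := by
  have h : ((ι q : ℕ) : ℝ≥0∞) ≤ 1 := by exact_mod_cast Nat.lt_succ_iff.mp (ι q).isLt
  calc ((ι q : ℕ) : ℝ≥0∞) * 2 ^ q ≤ 1 * 2 ^ q := mul_le_mul_left h _
    _ = 2 ^ q := one_mul _

lemma tsum_zpow_lt (Q : ℤ) : (∑' q : ℤ, if q < Q then (2 : ℝ≥0∞) ^ q else 0) = 2 ^ Q := by
  have hinj : Function.Injective (fun i : ℕ => Q - 1 - (i : ℤ)) := by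
    intro i j h; simp only at h; omega
  have hsupp : Function.support (fun q : ℤ => if q < Q then (2 : ℝ≥0∞) ^ q else 0) ⊆
      Set.range (fun i : ℕ => Q - 1 - (i : ℤ)) := by
    intro q hq
    by_cases h : q < Q
    · exact ⟨(Q - 1 - q).toNat, by simp only; rw [Int.toNat_of_nonneg (by omega)]; omega⟩
    · simp only [Function.mem_support, if_neg h] at hq; exact absurd rfl hq
  rw [← hinj.tsum_eq hsupp]
  have hterm : ∀ i : ℕ, (if (Q - 1 - (i : ℤ)) < Q then (2 : ℝ≥0∞) ^ (Q - 1 - (i : ℤ)) else 0)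
      = 2 ^ (Q - 1) * (2⁻¹) ^ i := by
    intro i
    rw [if_pos (by omega)]
    rw [show Q - 1 - (i : ℤ) = (Q - 1) + (-(i : ℤ)) by ring,
      ENNReal.zpow_add two_ne_zero ENNReal.ofNat_ne_top,
      ENNReal.zpow_neg, zpow_natCast, ← ENNReal.inv_pow]
  rw [tsum_congr hterm, ENNReal.tsum_mul_left, ENNReal.tsum_geometric,
    ENNReal.one_sub_inv_two, inv_inv]
  have hfin : (2 : ℝ≥0∞) ^ Q = 2 ^ (Q - 1) * 2 := by
    have h := ENNReal.zpow_add two_ne_zero ENNReal.ofNat_ne_top (Q - 1) 1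
    rw [zpow_one] at h
    rw [← h]
    congr 1 <;> omega
  rw [hfin]

lemma tsum_split (g : ℤ → ℝ≥0∞) (Q : ℤ) :
    ∑' q : ℤ, g q = (∑' q : ℤ, if Q ≤ q then g q else 0) + ∑' q : ℤ, (if q < Q then g q else 0) := by
  rw [← ENNReal.tsum_add]
  apply tsum_congr; intro q
  by_cases h : Q ≤ q
  · rw [if_pos h, if_neg (by omega)]; simp
  · rw [if_neg h, if_pos (by omega)]; simp

lemma low_bound {g : ℤ → ℝ≥0∞} {Q q1 : ℤ} (hq1 : q1 < Q)
    (hg : ∀ q, g q ≤ 2 ^ q) (hg1 : g q1 = 0) :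
    (∑' q : ℤ, if q < Q then g q else 0) + 2 ^ q1 ≤ 2 ^ Q := by
  have h1 : (∑' q : ℤ, if q < Q then g q else 0)
      ≤ ∑' q : ℤ, (if q = q1 then 0 else if q < Q then (2 : ℝ≥0∞) ^ q else 0) := by
    apply ENNReal.tsum_le_tsum; intro q
    by_cases he : q = q1
    · subst he; rw [if_pos rfl, if_pos hq1, hg1]
    · rw [if_neg he]; split_ifs with h
      · exact hg q
      · exact le_rfl
  calc (∑' q : ℤ, if q < Q then g q else 0) + 2 ^ q1
      ≤ (∑' q : ℤ, (if q = q1 then 0 else if q < Q then (2 : ℝ≥0∞) ^ q else 0)) + 2 ^ q1 :=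
        add_le_add_left h1 _
    _ = 2 ^ Q := by
        rw [add_comm, ← tsum_zpow_lt Q,
          ENNReal.tsum_eq_add_tsum_ite
            (f := fun q : ℤ => if q < Q then (2 : ℝ≥0∞) ^ q else 0) q1,
          if_pos hq1]
        congr 1
        apply tsum_congr
        intro q
        split_ifs <;> rfl

lemma phiE_ne_top {ι : ℤ → Fin 2} {K : ℤ} (hK : ∀ q, K ≤ q → ι q = 0) : PhiE ι ≠ ⊤ := by
  have hle : PhiE ι ≤ ∑' q : ℤ, (if q < K then (2 : ℝ≥0∞) ^ q else 0) := by
    apply ENNReal.tsum_le_tsum; intro q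
    by_cases h : q < K
    · rw [if_pos h]; exact term_le ι q
    · rw [if_neg h, hK q (by omega)]; simp
  rw [tsum_zpow_lt] at hle
  exact ne_top_of_le_ne_top (ENNReal.zpow_lt_top two_ne_zero ENNReal.ofNat_ne_top K).ne hle

lemma coe_phi {ι : ℤ → Fin 2} {K : ℤ} (hK : ∀ q, K ≤ q → ι q = 0) :
    ((Phi ι : NNReal) : ℝ≥0∞) = PhiE ι := by
  have hcoe : ∀ q : ℤ, ((((ι q : ℕ) : NNReal) * 2 ^ q : NNReal) : ℝ≥0∞)
      = ((ι q : ℕ) : ℝ≥0∞) * 2 ^ q := by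
    intro q
    rw [ENNReal.coe_mul, ENNReal.coe_natCast, ENNReal.coe_zpow (two_ne_zero)]
    norm_num
  have hsum : Summable (fun q : ℤ => ((ι q : ℕ) : NNReal) * 2 ^ q) := by
    rw [← ENNReal.tsum_coe_ne_top_iff_summable]
    rw [tsum_congr hcoe]
    exact phiE_ne_top hK
  rw [Phi, PhiE, ENNReal.coe_tsum hsum, tsum_congr hcoe]

lemma F_le_E (x : NNReal) (k : ℤ) : (F x k : ℝ≥0∞) * 2 ^ k ≤ (x : ℝ≥0∞) := by
  have h : ((F x k : NNReal) * 2 ^ k : NNReal) ≤ x := by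
    rw [← NNReal.coe_le_coe]; push_cast [NNReal.coe_zpow]; exact F_le x k
  calc (F x k : ℝ≥0∞) * 2 ^ k
      = (((F x k : NNReal) * 2 ^ k : NNReal) : ℝ≥0∞) := by
        rw [ENNReal.coe_mul, ENNReal.coe_natCast, ENNReal.coe_zpow (two_ne_zero)]; norm_num
    _ ≤ (x : ℝ≥0∞) := ENNReal.coe_le_coe.2 h

lemma phiE_bmap (x : NNReal) : PhiE (bmap x) = (x : ℝ≥0∞) := by
  obtain ⟨K, hK⟩ := exists_K x
  have hinj : Function.Injective (fun i : ℕ => K - 1 - (i : ℤ)) := by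
    intro i j h; simp only at h; omega
  have hsupp : Function.support (fun q : ℤ => ((bmap x q : ℕ) : ℝ≥0∞) * 2 ^ q) ⊆
      Set.range (fun i : ℕ => K - 1 - (i : ℤ)) := by
    intro q hq
    by_cases h : q < K
    · exact ⟨(K - 1 - q).toNat, by simp only; rw [Int.toNat_of_nonneg (by omega)]; omega⟩
    · rw [Function.mem_support] at hq
      have hb0 : bmap x q = 0 := bmap_high x hK (not_lt.1 h)
      exact absurd (by simp [hb0]) hq
  rw [PhiE, ← hinj.tsum_eq hsupp]
  have hpart : ∀ N : ℕ, (∑ i ∈ Finset.range N,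
      ((bmap x (K - 1 - (i : ℤ)) : ℕ) : ℝ≥0∞) * 2 ^ (K - 1 - (i : ℤ)))
      = (F x (K - (N : ℤ)) : ℝ≥0∞) * 2 ^ (K - (N : ℤ)) := by
    intro N; induction N with
    | zero => simp [F_eq_zero hK le_rfl]
    | succ N ih =>
      rw [Finset.sum_range_succ, ih]
      have e1 : K - ((N + 1 : ℕ) : ℤ) = K - 1 - (N : ℤ) := by push_cast; ring
      rw [e1]
      have hFr := F_succ x (K - 1 - (N : ℤ))
      have e2 : K - 1 - (N : ℤ) + 1 = K - (N : ℤ) := by ring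
      rw [e2] at hFr
      have hrec : (F x (K - 1 - (N : ℤ)) : ℝ≥0∞)
          = 2 * (F x (K - (N : ℤ)) : ℝ≥0∞) + ((bmap x (K - 1 - (N : ℤ)) : ℕ) : ℝ≥0∞) := by
        rw [bmap_val]; exact_mod_cast congrArg (Nat.cast (R := ℝ≥0∞)) hFr
      rw [hrec]
      have e3 : (2 : ℝ≥0∞) ^ (K - (N : ℤ)) = 2 ^ (K - 1 - (N : ℤ)) * 2 := by
        have h := ENNReal.zpow_add two_ne_zero ENNReal.ofNat_ne_top (K - 1 - (N : ℤ)) 1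
        rw [zpow_one] at h
        rw [← h]
        congr 1 <;> omega
      rw [e3]; ring
  apply le_antisymm
  · rw [ENNReal.tsum_eq_iSup_sum]
    apply iSup_le; intro s
    obtain ⟨N, hN⟩ := Finset.exists_nat_subset_range s
    calc (∑ i ∈ s, ((bmap x (K - 1 - (i : ℤ)) : ℕ) : ℝ≥0∞) * 2 ^ (K - 1 - (i : ℤ)))
        ≤ ∑ i ∈ Finset.range N, ((bmap x (K - 1 - (i : ℤ)) : ℕ) : ℝ≥0∞) * 2 ^ (K - 1 - (i : ℤ)) :=
          Finset.sum_le_sum_of_subset hN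
      _ = (F x (K - (N : ℤ)) : ℝ≥0∞) * 2 ^ (K - (N : ℤ)) := hpart N
      _ ≤ (x : ℝ≥0∞) := F_le_E x _
  · apply ENNReal.le_of_forall_pos_le_add
    intro ε hε _
    obtain ⟨j, hj⟩ := exists_pow_lt_of_lt_one
      (by exact_mod_cast hε : (0 : ℝ) < (ε : ℝ)) (by norm_num : (2 : ℝ)⁻¹ < 1)
    set N : ℕ := (K + j).toNat with hNdef
    have hKN : K - (N : ℤ) ≤ -(j : ℤ) := by
      have := Int.self_le_toNat (K + j); omega
    have hεj : (2 : ℝ) ^ (K - (N : ℤ)) ≤ (ε : ℝ) := by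
      calc (2 : ℝ) ^ (K - (N : ℤ)) ≤ 2 ^ (-(j : ℤ)) :=
            zpow_le_zpow_right₀ one_le_two hKN
        _ = (2⁻¹ : ℝ) ^ j := by
            rw [zpow_neg, zpow_natCast, ← inv_pow]
        _ ≤ (ε : ℝ) := hj.le
    have hNN : (x : NNReal) ≤ (F x (K - (N : ℤ)) : NNReal) * 2 ^ (K - (N : ℤ)) + ε := by
      rw [← NNReal.coe_le_coe]; push_cast [NNReal.coe_zpow]
      have h1 := lt_F_add_one x (K - (N : ℤ))
      have h2 : (0 : ℝ) < 2 ^ (K - (N : ℤ)) := by positivity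
      nlinarith
    calc (x : ℝ≥0∞) ≤ (((F x (K - (N : ℤ)) : NNReal) * 2 ^ (K - (N : ℤ)) + ε : NNReal) : ℝ≥0∞) :=
          ENNReal.coe_le_coe.2 hNN
      _ = (F x (K - (N : ℤ)) : ℝ≥0∞) * 2 ^ (K - (N : ℤ)) + (ε : ℝ≥0∞) := by
          rw [ENNReal.coe_add, ENNReal.coe_mul, ENNReal.coe_natCast,
            ENNReal.coe_zpow (two_ne_zero)]; norm_num
      _ = (∑ i ∈ Finset.range N,
            ((bmap x (K - 1 - (i : ℤ)) : ℕ) : ℝ≥0∞) * 2 ^ (K - 1 - (i : ℤ))) + (ε : ℝ≥0∞) := by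
          rw [hpart N]
      _ ≤ (∑' i : ℕ, ((bmap x (K - 1 - (i : ℤ)) : ℕ) : ℝ≥0∞) * 2 ^ (K - 1 - (i : ℤ))) + ε :=
          add_le_add_left (ENNReal.sum_le_tsum _) _

lemma phiE_strict {ι κ : ℤ → Fin 2} {q0 : ℤ} (hagree : ∀ q, q0 < q → ι q = κ q)
    (hι0 : ι q0 = 1) (hκ0 : κ q0 = 0) {q1 : ℤ} (hq1 : q1 < q0) (hκ1 : κ q1 = 0)
    {K : ℤ} (hκK : ∀ q, K ≤ q → κ q = 0) : PhiE κ < PhiE ι := by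
  have hAι : PhiE ι = (∑' q : ℤ, (if q0 ≤ q then ((ι q : ℕ) : ℝ≥0∞) * 2 ^ q else 0))
      + ∑' q : ℤ, (if q < q0 then ((ι q : ℕ) : ℝ≥0∞) * 2 ^ q else 0) :=
    tsum_split (fun q => ((ι q : ℕ) : ℝ≥0∞) * 2 ^ q) q0
  have hAκ : PhiE κ = (∑' q : ℤ, (if q0 ≤ q then ((κ q : ℕ) : ℝ≥0∞) * 2 ^ q else 0))
      + ∑' q : ℤ, (if q < q0 then ((κ q : ℕ) : ℝ≥0∞) * 2 ^ q else 0) :=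
    tsum_split (fun q => ((κ q : ℕ) : ℝ≥0∞) * 2 ^ q) q0
  set Hiι := ∑' q : ℤ, (if q0 ≤ q then ((ι q : ℕ) : ℝ≥0∞) * 2 ^ q else 0) with hHiι
  set Hiκ := ∑' q : ℤ, (if q0 ≤ q then ((κ q : ℕ) : ℝ≥0∞) * 2 ^ q else 0) with hHiκ
  set Loι := ∑' q : ℤ, (if q < q0 then ((ι q : ℕ) : ℝ≥0∞) * 2 ^ q else 0) with hLoι
  set Loκ := ∑' q : ℤ, (if q < q0 then ((κ q : ℕ) : ℝ≥0∞) * 2 ^ q else 0) with hLoκ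
  have hHi : Hiι = Hiκ + 2 ^ q0 := by
    rw [hHiι, hHiκ, ENNReal.tsum_eq_add_tsum_ite (f := fun q =>
      (if q0 ≤ q then ((ι q : ℕ) : ℝ≥0∞) * 2 ^ q else 0)) q0,
      ENNReal.tsum_eq_add_tsum_ite (f := fun q =>
      (if q0 ≤ q then ((κ q : ℕ) : ℝ≥0∞) * 2 ^ q else 0)) q0,
      if_pos le_rfl, if_pos le_rfl, hι0, hκ0]
    simp only [Fin.val_one, Fin.val_zero, Nat.cast_one, Nat.cast_zero, one_mul, zero_mul,
      zero_add]
    rw [add_comm]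
    congr 1
    apply tsum_congr
    intro q
    by_cases he : q = q0
    · rw [if_pos he, if_pos he]
    · rw [if_neg he, if_neg he]
      by_cases h : q0 ≤ q
      · rw [if_pos h, if_pos h, hagree q (by omega)]
      · rw [if_neg h, if_neg h]
  have hLo : Loκ + 2 ^ q1 ≤ 2 ^ q0 := by
    apply low_bound hq1 (fun q => term_le κ q)
    rw [hκ1]; simp
  have hfinκ : PhiE κ ≠ ⊤ := phiE_ne_top hκK
  have h2q1 : (2 : ℝ≥0∞) ^ q1 ≠ 0 := (ENNReal.zpow_pos two_ne_zero ENNReal.ofNat_ne_top q1).ne'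
  calc PhiE κ < PhiE κ + 2 ^ q1 := ENNReal.lt_add_right hfinκ h2q1
    _ = Hiκ + (Loκ + 2 ^ q1) := by rw [hAκ]; ring
    _ ≤ Hiκ + 2 ^ q0 := add_le_add_right hLo _
    _ = Hiι := hHi.symm
    _ ≤ Hiι + Loι := le_self_add
    _ = PhiE ι := hAι.symm

lemma phiE_inj {ι κ : ℤ → Fin 2}
    (h1ι : ∀ M : ℤ, ∃ k ≤ M, ι k = 0) (h2ι : ∃ K : ℤ, ∀ q, K ≤ q → ι q = 0)
    (h1κ : ∀ M : ℤ, ∃ k ≤ M, κ k = 0) (h2κ : ∃ K : ℤ, ∀ q, K ≤ q → κ q = 0)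
    (heq : PhiE ι = PhiE κ) : ι = κ := by
  by_contra hne
  obtain ⟨Kι, hKι⟩ := h2ι
  obtain ⟨Kκ, hKκ⟩ := h2κ
  obtain ⟨q0, hq0, hmax⟩ := Int.exists_greatest_of_bdd (P := fun q => ι q ≠ κ q)
    ⟨max Kι Kκ, fun z hz => by
      by_contra h
      push_neg at h
      exact hz (by rw [hKι z (by omega), hKκ z (by omega)])⟩
    (Function.ne_iff.1 hne)
  have hagree : ∀ q, q0 < q → ι q = κ q := by
    intro q hq
    by_contra h
    have := hmax q h
    omega
  have hvals : (ι q0 = 1 ∧ κ q0 = 0) ∨ (ι q0 = 0 ∧ κ q0 = 1) := by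
    have h1 := (ι q0).isLt
    have h2 := (κ q0).isLt
    have h3 : (ι q0 : ℕ) ≠ (κ q0 : ℕ) := fun h => hq0 (Fin.ext h)
    rcases Nat.lt_or_ge (ι q0 : ℕ) (κ q0 : ℕ) with h | h
    · right; constructor <;> · apply Fin.ext; simp; omega
    · left; constructor <;> · apply Fin.ext; simp; omega
  rcases hvals with ⟨hι0, hκ0⟩ | ⟨hι0, hκ0⟩
  · obtain ⟨q1, hq1le, hq1z⟩ := h1κ (q0 - 1)
    exact absurd heq.symm (phiE_strict hagree hι0 hκ0 (by omega) hq1z hKκ).ne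
  · obtain ⟨q1, hq1le, hq1z⟩ := h1ι (q0 - 1)
    exact absurd heq ((phiE_strict (fun q hq => (hagree q hq).symm) hκ0 hι0 (by omega)
      hq1z hKι).ne)

end BmapAux

open BmapAux

section Interleave

variable {m : ℕ}

/-- The interleaved digit sequence. -/
noncomputable def ileave (m : ℕ) (hm : 0 < m) (x : Fin m → NNReal) : ℤ → Fin 2 := fun q =>
  bmap (x ⟨(q % (m : ℤ)).toNat, by
    have hm' : (0 : ℤ) < (m : ℤ) := by exact_mod_cast hm
    have h1 := Int.emod_lt_of_pos q hm'
    have h2 := Int.emod_nonneg q hm'.ne'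
    omega⟩) (q / (m : ℤ))

lemma Bmap_eq (hm : 0 < m) (x : Fin m → NNReal) : Bmap m x = Phi (ileave m hm x) := by
  unfold Bmap ileave
  congr 1
  funext q
  rw [dif_pos hm]

lemma key_idx {m : ℤ} (hm : 0 < m) (n k r : ℤ) (hr0 : 0 ≤ r) (hrm : r < m) :
    (-(n * m) ≤ m * k + r) ↔ -n ≤ k := by
  constructor
  · intro h
    by_contra hk
    push_neg at hk
    have h1 : m * k ≤ m * (-n - 1) := mul_le_mul_of_nonneg_left (by omega) (by omega)
    nlinarith
  · intro h
    have h1 : m * (-n) ≤ m * k := mul_le_mul_of_nonneg_left h (by omega)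
    nlinarith

lemma ileave_low_zeros (hm : 0 < m) (x : Fin m → NNReal) (M : ℤ) :
    ∃ q ≤ M, ileave m hm x q = 0 := by
  set i0 : Fin m := ⟨0, hm⟩ with hi0
  obtain ⟨k, hkle, hk0⟩ := exists_dig_zero (x i0) (min M 0)
  refine ⟨k * m, ?_, ?_⟩
  · have hk0' : k ≤ 0 := le_trans hkle (min_le_right _ _)
    have : k * (m : ℤ) ≤ k * 1 := mul_le_mul_of_nonpos_left (by exact_mod_cast hm) hk0'
    have := min_le_left M 0
    omega
  · unfold ileave
    have he : (k * (m : ℤ)) % (m : ℤ) = 0 := Int.mul_emod_left k m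
    have hd : (k * (m : ℤ)) / (m : ℤ) = k :=
      Int.mul_ediv_cancel k (by exact_mod_cast hm.ne')
    have hidx : (⟨((k * (m : ℤ)) % (m : ℤ)).toNat, by
        have hm' : (0 : ℤ) < (m : ℤ) := by exact_mod_cast hm
        have h1 := Int.emod_lt_of_pos (k * (m : ℤ)) hm'
        have h2 := Int.emod_nonneg (k * (m : ℤ)) hm'.ne'
        omega⟩ : Fin m) = i0 := by
      apply Fin.ext
      simp only [hi0]
      rw [he]
      rfl
    rw [hidx, hd]
    exact bmap_eq_zero_iff.2 hk0

lemma ileave_high_zeros (hm : 0 < m) (x : Fin m → NNReal) :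
    ∃ Kq : ℤ, ∀ q, Kq ≤ q → ileave m hm x q = 0 := by
  obtain ⟨K, hK⟩ := exists_K (Finset.univ.sup x)
  have hxK : ∀ i, ((x i : NNReal) : ℝ) < 2 ^ K := by
    intro i
    have h1 : x i ≤ Finset.univ.sup x := Finset.le_sup (Finset.mem_univ i)
    exact lt_of_le_of_lt (by exact_mod_cast h1) hK
  refine ⟨K * m, fun q hq => ?_⟩
  have hdiv : K ≤ q / (m : ℤ) := by
    rw [Int.le_ediv_iff_mul_le (by exact_mod_cast hm)]
    exact hq
  exact bmap_high _ (hxK _) hdiv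

lemma Bmap_injective (hm : 0 < m) : Function.Injective (Bmap m) := by
  intro x y h
  rw [Bmap_eq hm x, Bmap_eq hm y] at h
  obtain ⟨Kx, hKx⟩ := ileave_high_zeros hm x
  obtain ⟨Ky, hKy⟩ := ileave_high_zeros hm y
  have hE : PhiE (ileave m hm x) = PhiE (ileave m hm y) := by
    rw [← coe_phi hKx, ← coe_phi hKy, h]
  have hiota : ileave m hm x = ileave m hm y := by
    apply phiE_inj _ ⟨Kx, hKx⟩ _ ⟨Ky, hKy⟩ hE
    · intro M
      obtain ⟨q, hq, hq0⟩ := ileave_low_zeros hm x M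
      exact ⟨q, hq, hq0⟩
    · intro M
      obtain ⟨q, hq, hq0⟩ := ileave_low_zeros hm y M
      exact ⟨q, hq, hq0⟩
  funext i
  have hb : bmap (x i) = bmap (y i) := by
    funext k
    have hq := congrFun hiota ((i : ℤ) + (m : ℤ) * k)
    have he : ((i : ℤ) + (m : ℤ) * k) % (m : ℤ) = (i : ℤ) := by
      rw [Int.add_mul_emod_self_left]
      exact Int.emod_eq_of_lt (by positivity) (by exact_mod_cast i.isLt)
    have hd : ((i : ℤ) + (m : ℤ) * k) / (m : ℤ) = k := by
      rw [Int.add_mul_ediv_left _ _ (by exact_mod_cast hm.ne' : (m : ℤ) ≠ 0)]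
      rw [Int.ediv_eq_zero_of_lt (by positivity) (by exact_mod_cast i.isLt)]
      ring
    unfold ileave at hq
    have hidx : ∀ (z : Fin m → NNReal), bmap (z ⟨(((i : ℤ) + (m : ℤ) * k) % (m : ℤ)).toNat, by
        have hm' : (0 : ℤ) < (m : ℤ) := by exact_mod_cast hm
        have h1 := Int.emod_lt_of_pos ((i : ℤ) + (m : ℤ) * k) hm'
        have h2 := Int.emod_nonneg ((i : ℤ) + (m : ℤ) * k) hm'.ne'
        omega⟩) (((i : ℤ) + (m : ℤ) * k) / (m : ℤ)) = bmap (z i) k := by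
      intro z
      congr 1
      · congr 1
        apply Fin.ext
        simp only [he]
        simp
    rw [hidx x, hidx y] at hq
    exact hq
  have hxy : ((x i : NNReal) : ℝ≥0∞) = ((y i : NNReal) : ℝ≥0∞) := by
    rw [← phiE_bmap (x i), ← phiE_bmap (y i), hb]
  exact_mod_cast hxy

end Interleave

/-- `B` maps the half-open dyadic hyperblock `∏_i [a_i 2^{-n}, (a_i+1) 2^{-n})`
injectively into the interval `[B(x_a), B(x_a) + 2^{-nm})`, where
`x_a = (a_1 2^{-n}, …, a_m 2^{-n})`. -/
theorem Bmap_mapsTo_injOn_hyperblock (m : ℕ) (hm : 1 ≤ m) (n : ℤ) (a : Fin m → ℕ) :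
    Set.MapsTo (Bmap m)
      (Set.univ.pi fun i =>
        Set.Ico ((a i : NNReal) * 2 ^ (-n)) (((a i : NNReal) + 1) * 2 ^ (-n)))
      (Set.Ico (Bmap m fun i => (a i : NNReal) * 2 ^ (-n))
        ((Bmap m fun i => (a i : NNReal) * 2 ^ (-n)) + 2 ^ (-(n * m)))) ∧
    Set.InjOn (Bmap m)
      (Set.univ.pi fun i =>
        Set.Ico ((a i : NNReal) * 2 ^ (-n)) (((a i : NNReal) + 1) * 2 ^ (-n))) := by
  have hm' : 0 < m := hm
  constructor
  · intro x hx
    have hxi : ∀ i, (a i : NNReal) * 2 ^ (-n) ≤ x i ∧ x i < ((a i : NNReal) + 1) * 2 ^ (-n) := by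
      intro i
      have := hx i (Set.mem_univ i)
      exact ⟨this.1, this.2⟩
    set c : Fin m → NNReal := fun i => (a i : NNReal) * 2 ^ (-n) with hc
    set Q : ℤ := -(n * (m : ℤ)) with hQ
    set ι := ileave m hm' x with hidef
    set κ := ileave m hm' c with hkdef
    -- digit facts
    have hmod : ∀ q : ℤ, 0 ≤ q % (m : ℤ) ∧ q % (m : ℤ) < (m : ℤ) := fun q =>
      ⟨Int.emod_nonneg q (by exact_mod_cast hm'.ne'), Int.emod_lt_of_pos q (by exact_mod_cast hm')⟩
    have hsum : ∀ q : ℤ, (m : ℤ) * (q / (m : ℤ)) + q % (m : ℤ) = q := fun q =>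
      Int.mul_ediv_add_emod q m
    have hA : ∀ q, Q ≤ q → ι q = κ q := by
      intro q hq
      have hdiv : -n ≤ q / (m : ℤ) := by
        have h1 := (hmod q).1
        have h2 := (hmod q).2
        have h3 := hsum q
        rw [← h3] at hq
        exact (key_idx (by exact_mod_cast hm') n (q / (m : ℤ)) (q % (m : ℤ)) h1 h2).1 hq
      exact bmap_const (hxi _).1 (hxi _).2 hdiv
    have hB : ∀ q, q < Q → κ q = 0 := by
      intro q hq
      have hdiv : q / (m : ℤ) < -n := by
        by_contra hcon
        push_neg at hcon
        have h1 := (hmod q).1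
        have h2 := (hmod q).2
        have h3 := hsum q
        have := (key_idx (by exact_mod_cast hm') n (q / (m : ℤ)) (q % (m : ℤ)) h1 h2).2 hcon
        omega
      exact bmap_base_low (a _) n hdiv
    -- a zero digit of ι below Q
    obtain ⟨k1, hk1le, hk1z⟩ := exists_dig_zero (x ⟨0, hm'⟩) (-n - 1)
    set q1 : ℤ := k1 * m with hq1def
    have hq1Q : q1 < Q := by
      have h1 : k1 * (m : ℤ) ≤ (-n - 1) * (m : ℤ) :=
        mul_le_mul_of_nonneg_right hk1le (by positivity)
      have h2 : (-n - 1) * (m : ℤ) = -(n * (m : ℤ)) - (m : ℤ) := by ring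
      have h3 : (0 : ℤ) < (m : ℤ) := by exact_mod_cast hm'
      omega
    have hιq1 : ι q1 = 0 := by
      rw [hidef]
      unfold ileave
      have he : (k1 * (m : ℤ)) % (m : ℤ) = 0 := Int.mul_emod_left k1 m
      have hd : (k1 * (m : ℤ)) / (m : ℤ) = k1 :=
        Int.mul_ediv_cancel k1 (by exact_mod_cast hm'.ne')
      have hidx : (⟨((q1 : ℤ) % (m : ℤ)).toNat, by
          have hm'' : (0 : ℤ) < (m : ℤ) := by exact_mod_cast hm'
          have h1 := Int.emod_lt_of_pos (q1 : ℤ) hm''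
          have h2 := Int.emod_nonneg (q1 : ℤ) hm''.ne'
          omega⟩ : Fin m) = ⟨0, hm'⟩ := by
        apply Fin.ext
        simp only [hq1def, he]
        rfl
      rw [hidx]
      rw [hq1def, hd]
      exact bmap_eq_zero_iff.2 hk1z
    -- sums
    obtain ⟨Kx, hKx⟩ := ileave_high_zeros hm' x
    obtain ⟨Kc, hKc⟩ := ileave_high_zeros hm' c
    have hcoeι : ((Bmap m x : NNReal) : ℝ≥0∞) = PhiE ι := by
      rw [Bmap_eq hm' x, coe_phi hKx]
    have hcoeκ : ((Bmap m c : NNReal) : ℝ≥0∞) = PhiE κ := by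
      rw [Bmap_eq hm' c, coe_phi hKc]
    have hsplitι : PhiE ι = (∑' q : ℤ, (if Q ≤ q then ((ι q : ℕ) : ℝ≥0∞) * 2 ^ q else 0))
        + ∑' q : ℤ, (if q < Q then ((ι q : ℕ) : ℝ≥0∞) * 2 ^ q else 0) :=
      BmapAux.tsum_split (fun q => ((ι q : ℕ) : ℝ≥0∞) * 2 ^ q) Q
    have hsplitκ : PhiE κ = (∑' q : ℤ, (if Q ≤ q then ((κ q : ℕ) : ℝ≥0∞) * 2 ^ q else 0))
        + ∑' q : ℤ, (if q < Q then ((κ q : ℕ) : ℝ≥0∞) * 2 ^ q else 0) :=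
      BmapAux.tsum_split (fun q => ((κ q : ℕ) : ℝ≥0∞) * 2 ^ q) Q
    set Hi := ∑' q : ℤ, (if Q ≤ q then ((ι q : ℕ) : ℝ≥0∞) * 2 ^ q else 0) with hHi
    set Lo := ∑' q : ℤ, (if q < Q then ((ι q : ℕ) : ℝ≥0∞) * 2 ^ q else 0) with hLo
    have hHiκ : (∑' q : ℤ, (if Q ≤ q then ((κ q : ℕ) : ℝ≥0∞) * 2 ^ q else 0)) = Hi := by
      rw [hHi]
      apply tsum_congr; intro q
      by_cases h : Q ≤ q
      · rw [if_pos h, if_pos h, hA q h]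
      · rw [if_neg h, if_neg h]
    have hLoκ : (∑' q : ℤ, (if q < Q then ((κ q : ℕ) : ℝ≥0∞) * 2 ^ q else 0)) = 0 := by
      convert tsum_zero with q
      by_cases h : q < Q
      · rw [if_pos h, hB q h]; simp
      · rw [if_neg h]
    have hκE : PhiE κ = Hi := by
      rw [hsplitκ, hHiκ, hLoκ, add_zero]
    have hιE : PhiE ι = Hi + Lo := hsplitι
    -- conclude
    have hlow : Lo + 2 ^ q1 ≤ 2 ^ Q := by
      apply low_bound hq1Q (fun q => term_le ι q)
      rw [hιq1]; simp
    have hub : ((Bmap m x : NNReal) : ℝ≥0∞) < ((Bmap m c + 2 ^ Q : NNReal) : ℝ≥0∞) := by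
      have h2q1 : (2 : ℝ≥0∞) ^ q1 ≠ 0 :=
        (ENNReal.zpow_pos two_ne_zero ENNReal.ofNat_ne_top q1).ne'
      have hcoeadd : ((Bmap m c + 2 ^ Q : NNReal) : ℝ≥0∞) = PhiE κ + 2 ^ Q := by
        rw [ENNReal.coe_add, hcoeκ, ENNReal.coe_zpow (two_ne_zero)]
        norm_num
      rw [hcoeadd, hcoeι]
      calc PhiE ι < PhiE ι + 2 ^ q1 := ENNReal.lt_add_right (hcoeι ▸ ENNReal.coe_ne_top) h2q1
        _ = Hi + (Lo + 2 ^ q1) := by rw [hιE]; ring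
        _ ≤ Hi + 2 ^ Q := add_le_add_right hlow _
        _ = PhiE κ + 2 ^ Q := by rw [hκE]
    have hlb : Bmap m c ≤ Bmap m x := by
      rw [← ENNReal.coe_le_coe, hcoeι, hcoeκ, hκE, hιE]
      exact le_self_add
    constructor
    · exact hlb
    · exact_mod_cast hub
  · exact (Bmap_injective hm').injOn
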